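/- arXiv:2605.25897 — 2 statements merged into one kernel-verified Lean document; each statement's English description precedes it below -/
import Mathlib

section
/- Let m be a positive integer and let F and G be cumulative distribution functions on ℝ with finite mean. Then for every p ∈ [1, ∞), ∫_ℝ |H_m(F)(x) − H_m(G)(x)|^p dx ≤ ∫_ℝ |F(x) − G(x)| dx; that is, ‖H_m(F) − H_m(G)‖_p^p ≤ ‖F − G‖_1, so in particular H_m is non-expansive in the L¹ norm. -/
/-!
`H_m(F)` is the CDF of the uniform distribution on the `m` points `μ_{j:m}(F)`. Since
`H_m(F) - H_m(G)` takes values in `[-1, 1]`, its `p`-th power is dominated by its absolute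
value, which is at most the average over `j` of the indicators of the intervals between
`μ_{j:m}(F)` and `μ_{j:m}(G)`; integrating gives `(1/m) ∑_j |μ_{j:m}(F) - μ_{j:m}(G)|`.
Each term is at most `∫₀¹ |F⁻¹ - G⁻¹| f_{B_{j:m}}`, and the Beta densities
`f_{B_{1:m}}, …, f_{B_{m:m}}` sum to `m` (binomial theorem), so the bound is
`∫₀¹ |F⁻¹ - G⁻¹|`. By Tonelli this equals `∫ |F - G|`: both are the area of the region
between the graphs of `F` and `G`, sliced horizontally and vertically.
-/

open MeasureTheory Filter Set
open scoped BoundedContinuousFunction ProbabilityTheory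

noncomputable section

/-- Density of the Beta(j, m-j+1) distribution. -/
def betaDens (m j : ℕ) (u : ℝ) : ℝ :=
  (m : ℝ) * ((m - 1).choose (j - 1) : ℝ) * u ^ (j - 1) * (1 - u) ^ (m - j)

/-- Quantile function (left-continuous generalized inverse). -/
def quantile (G : ℝ → ℝ) (p : ℝ) : ℝ :=
  sInf {x : ℝ | p ≤ G x}

/-- `G` is a cumulative distribution function on ℝ. -/
structure IsCDF (G : ℝ → ℝ) : Prop where
  mono : Monotone G
  rightCont : ∀ x, ContinuousWithinAt G (Ici x) x
  tendsto_atBot : Tendsto G atBot (nhds 0)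
  tendsto_atTop : Tendsto G atTop (nhds 1)

/-- `G` has finite mean: its quantile function is integrable on (0,1). -/
def HasFiniteMean (G : ℝ → ℝ) : Prop :=
  IntegrableOn (fun u => quantile G u) (Ioo (0:ℝ) 1)

/-- Expected j-th order statistic from a sample of size m drawn from G. -/
def muOS (m j : ℕ) (G : ℝ → ℝ) : ℝ :=
  ∫ u in Ioo (0:ℝ) 1, quantile G u * betaDens m j u

/-- The Hoeffding CDF operator `H_m`. -/
def hoeffCDF (m : ℕ) (G : ℝ → ℝ) (x : ℝ) : ℝ :=
  (m : ℝ)⁻¹ * ∑ j ∈ Finset.Icc 1 m, if muOS m j G ≤ x then (1:ℝ) else 0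

/-- The quantile-Hoeffding operator `I_m`. -/
def quantHoeff (m : ℕ) (h : ℝ → ℝ) (u : ℝ) : ℝ :=
  ∑ j ∈ Finset.Icc 1 m,
    (∫ t in Ioo (0:ℝ) 1, h t * betaDens m j t) *
      (if u ∈ Ioc (((j : ℝ) - 1) / m) ((j : ℝ) / m) then (1:ℝ) else 0)

/-- Empirical CDF of the reals `x 0, ..., x (n-1)`. -/
def ecdf (n : ℕ) (x : ℕ → ℝ) (t : ℝ) : ℝ :=
  (n : ℝ)⁻¹ * ∑ i ∈ Finset.range n, if x i ≤ t then (1:ℝ) else 0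

/-- Empirical CDF of the random sample `X 0, ..., X (n-1)`. -/
def empCDF {Ω : Type*} (X : ℕ → Ω → ℝ) (n : ℕ) (ω : Ω) : ℝ → ℝ :=
  fun t => (n : ℝ)⁻¹ * ∑ i ∈ Finset.range n, if X i ω ≤ t then (1:ℝ) else 0

open scoped symmDiff Interval

lemma Ici_symmDiff_Ici {α : Type*} [LinearOrder α] (a b : α) :
    Ici a ∆ Ici b = Ico (min a b) (max a b) := by
  ext x
  simp only [mem_symmDiff, mem_Ici, mem_Ico, min_le_iff, lt_max_iff]
  grind

lemma Iic_symmDiff_Iic {α : Type*} [LinearOrder α] (a b : α) : Iic a ∆ Iic b = Ι a b := by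
  rw [Set.symmDiff_def, Iic_sdiff_Iic, Iic_sdiff_Iic, union_comm, uIoc_eq_union]

lemma abs_ite_le_sub_ite_le (a b x : ℝ) :
    |(if a ≤ x then (1 : ℝ) else 0) - (if b ≤ x then 1 else 0)|
      = (Ici a ∆ Ici b).indicator 1 x := by
  have h := abs_indicator_symmDiff (Ici a) (Ici b) (1 : ℝ → ℝ) x
  rw [abs_of_nonneg (indicator_nonneg (f := 1) (fun _ _ => zero_le_one) x)] at h
  simp only [h, indicator_apply, mem_Ici, Pi.one_apply]

lemma integrable_abs_ite_le_sub_ite_le (a b : ℝ) :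
    Integrable fun x : ℝ =>
      |(if a ≤ x then (1 : ℝ) else 0) - (if b ≤ x then 1 else 0)| := by
  simp_rw [abs_ite_le_sub_ite_le, Ici_symmDiff_Ici]
  exact (integrable_indicator_iff measurableSet_Ico).2 (integrableOn_const (by simp))

lemma integral_abs_ite_le_sub_ite_le (a b : ℝ) :
    ∫ x, |(if a ≤ x then (1 : ℝ) else 0) - (if b ≤ x then 1 else 0)| = |a - b| := by
  simp_rw [abs_ite_le_sub_ite_le, Ici_symmDiff_Ici]
  rw [integral_indicator_one measurableSet_Ico, Real.volume_real_Ico_of_le min_le_max,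
    max_sub_min_eq_abs']

namespace IsCDF

variable {F G : ℝ → ℝ}

lemma nonneg (hG : IsCDF G) (x : ℝ) : 0 ≤ G x :=
  le_of_tendsto hG.tendsto_atBot
    (by filter_upwards [eventually_le_atBot x] with y hy using hG.mono hy)

lemma le_one (hG : IsCDF G) (x : ℝ) : G x ≤ 1 :=
  ge_of_tendsto hG.tendsto_atTop
    (by filter_upwards [eventually_ge_atTop x] with y hy using hG.mono hy)

lemma quantile_le_iff (hG : IsCDF G) {u x : ℝ} (hu : u ∈ Ioo 0 1) :
    quantile G u ≤ x ↔ u ≤ G x := by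
  have hne : {x | u ≤ G x}.Nonempty :=
    (hG.tendsto_atTop.eventually (eventually_gt_nhds hu.2)).exists.imp fun _ => le_of_lt
  have hbdd : BddBelow {x | u ≤ G x} := by
    obtain ⟨y, hy⟩ := eventually_atBot.1 (hG.tendsto_atBot.eventually (eventually_lt_nhds hu.1))
    exact ⟨y, fun x hx => le_of_not_gt fun hxy => (hy x hxy.le).not_ge hx⟩
  refine ⟨fun h => ?_, fun h => csInf_le hbdd h⟩
  -- `u ≤ G` on `(quantile G u, ∞)`, and right continuity carries this to the quantile itself
  have hq : u ≤ G (quantile G u) := by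
    refine ge_of_tendsto ((hG.rightCont _).mono_left (nhdsWithin_mono _ Ioi_subset_Ici_self))
      (eventually_nhdsWithin_of_forall fun z hz => ?_)
    obtain ⟨s, hs, hsz⟩ := exists_lt_of_csInf_lt hne hz
    exact hs.trans (hG.mono hsz.le)
  exact hq.trans (hG.mono h)

lemma setOf_le_eq_Ici (hG : IsCDF G) {u : ℝ} (hu : u ∈ Ioo 0 1) :
    {x | u ≤ G x} = Ici (quantile G u) :=
  ext fun _ => (hG.quantile_le_iff hu).symm

lemma monotoneOn_quantile (hG : IsCDF G) : MonotoneOn (quantile G) (Ioo 0 1) :=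
  fun _ hu _ hv huv =>
    (hG.quantile_le_iff hu).2 (huv.trans ((hG.quantile_le_iff hv).1 le_rfl))

lemma lintegral_abs_quantile_sub (hF : IsCDF F) (hG : IsCDF G) :
    ∫⁻ u in Ioo 0 1, ENNReal.ofReal |quantile F u - quantile G u|
      = ∫⁻ x, ENNReal.ofReal |F x - G x| := by
  set S : Set (ℝ × ℝ) := {p | p.1 ≤ F p.2} ∆ {p | p.1 ≤ G p.2}
  have hS : MeasurableSet S :=
    (measurableSet_le measurable_fst (hF.mono.measurable.comp measurable_snd)).symmDiff
      (measurableSet_le measurable_fst (hG.mono.measurable.comp measurable_snd))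
  have slice_u : ∀ u ∈ Ioo (0 : ℝ) 1,
      volume (Prod.mk u ⁻¹' S) = ENNReal.ofReal |quantile F u - quantile G u| := by
    intro u hu
    change volume ({x | u ≤ F x} ∆ {x | u ≤ G x}) = _
    rw [hF.setOf_le_eq_Ici hu, hG.setOf_le_eq_Ici hu, Ici_symmDiff_Ici, Real.volume_Ico,
      max_sub_min_eq_abs']
  have slice_x : ∀ x, volume.restrict (Ioo 0 1) ((fun u => (u, x)) ⁻¹' S)
      = ENNReal.ofReal |F x - G x| := by
    intro x
    change volume.restrict (Ioo 0 1) (Iic (F x) ∆ Iic (G x)) = _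
    have hsub : Ι (F x) (G x) ⊆ Ioc 0 1 :=
      Ioc_subset_Ioc (le_min (hF.nonneg x) (hG.nonneg x)) (max_le (hF.le_one x) (hG.le_one x))
    rw [Iic_symmDiff_Iic, Measure.restrict_congr_set Ioo_ae_eq_Ioc,
      Measure.restrict_apply measurableSet_uIoc, inter_eq_left.2 hsub, Real.volume_uIoc,
      abs_sub_comm]
  calc ∫⁻ u in Ioo 0 1, ENNReal.ofReal |quantile F u - quantile G u|
      = ∫⁻ u in Ioo 0 1, volume (Prod.mk u ⁻¹' S) :=
        setLIntegral_congr_fun measurableSet_Ioo fun u hu => (slice_u u hu).symm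
    _ = (volume.restrict (Ioo 0 1)).prod volume S := (Measure.prod_apply hS).symm
    _ = ∫⁻ x, volume.restrict (Ioo 0 1) ((fun u => (u, x)) ⁻¹' S) :=
        Measure.prod_apply_symm hS
    _ = ∫⁻ x, ENNReal.ofReal |F x - G x| := lintegral_congr slice_x

lemma integral_abs_quantile_sub (hF : IsCDF F) (hG : IsCDF G) :
    ∫ u in Ioo 0 1, |quantile F u - quantile G u| = ∫ x, |F x - G x| := by
  have hq : AEStronglyMeasurable (fun u => |quantile F u - quantile G u|)
      (volume.restrict (Ioo 0 1)) :=
    ((aemeasurable_restrict_of_monotoneOn measurableSet_Ioo hF.monotoneOn_quantile).sub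
      (aemeasurable_restrict_of_monotoneOn measurableSet_Ioo hG.monotoneOn_quantile)).abs
      |>.aestronglyMeasurable
  have hFG : AEStronglyMeasurable (fun x => |F x - G x|) volume :=
    (hF.mono.measurable.sub hG.mono.measurable).abs.aestronglyMeasurable
  rw [integral_eq_lintegral_of_nonneg_ae (ae_of_all _ fun _ => abs_nonneg _) hq,
    integral_eq_lintegral_of_nonneg_ae (ae_of_all _ fun _ => abs_nonneg _) hFG,
    hF.lintegral_abs_quantile_sub hG]

end IsCDF

lemma betaDens_nonneg (m j : ℕ) {u : ℝ} (hu : u ∈ Icc 0 1) : 0 ≤ betaDens m j u :=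
  mul_nonneg (mul_nonneg (by positivity) (pow_nonneg hu.1 _)) (pow_nonneg (sub_nonneg.2 hu.2) _)

lemma sum_betaDens {m : ℕ} (hm : 0 < m) (u : ℝ) :
    ∑ j ∈ Finset.Icc 1 m, betaDens m j u = m := by
  obtain ⟨n, rfl⟩ : ∃ n, m = n + 1 := ⟨m - 1, by omega⟩
  have bernstein : ∀ i ∈ Finset.range (n + 1),
      betaDens (n + 1) (i + 1) u = (n + 1 : ℕ) * (u ^ i * (1 - u) ^ (n - i) * n.choose i) := by
    intro i _
    simp only [betaDens, Nat.add_sub_cancel, Nat.add_sub_add_right]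
    ring
  rw [← Finset.map_add_right_Icc 0 n 1, Finset.sum_map, ← Nat.range_succ_eq_Icc_zero]
  simp only [addRightEmbedding_apply]
  rw [Finset.sum_congr rfl bernstein, ← Finset.mul_sum, ← add_pow, add_sub_cancel, one_pow,
    mul_one]

lemma integrableOn_mul_betaDens {q : ℝ → ℝ} (hq : IntegrableOn q (Ioo 0 1)) (m j : ℕ) :
    IntegrableOn (fun u => q u * betaDens m j u) (Ioo 0 1) :=
  hq.mul_continuousOn_of_subset (by unfold betaDens; fun_prop) measurableSet_Ioo isCompact_Icc
    Ioo_subset_Icc_self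

lemma inv_mul_sum_integral_mul_betaDens {m : ℕ} (hm : 0 < m) {q : ℝ → ℝ}
    (hq : IntegrableOn q (Ioo 0 1)) :
    (m : ℝ)⁻¹ * ∑ j ∈ Finset.Icc 1 m, ∫ u in Ioo 0 1, q u * betaDens m j u
      = ∫ u in Ioo 0 1, q u := by
  rw [← integral_finsetSum _ fun j _ => integrableOn_mul_betaDens hq m j]
  simp_rw [← Finset.mul_sum, sum_betaDens hm, integral_mul_const]
  field_simp

lemma abs_muOS_sub_le (m j : ℕ) {F G : ℝ → ℝ} (hF : HasFiniteMean F)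
    (hG : HasFiniteMean G) :
    |muOS m j F - muOS m j G|
      ≤ ∫ u in Ioo 0 1, |quantile F u - quantile G u| * betaDens m j u := by
  rw [muOS, muOS, ← integral_sub (integrableOn_mul_betaDens hF m j)
    (integrableOn_mul_betaDens hG m j)]
  refine abs_integral_le_integral_abs.trans_eq
    (setIntegral_congr_fun measurableSet_Ioo fun u hu => ?_)
  rw [← sub_mul, abs_mul, abs_of_nonneg (betaDens_nonneg m j (Ioo_subset_Icc_self hu))]

lemma hoeffCDF_mem_Icc (m : ℕ) (G : ℝ → ℝ) (x : ℝ) : hoeffCDF m G x ∈ Icc 0 1 := by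
  rw [hoeffCDF, Finset.sum_boole]
  refine ⟨by positivity, inv_mul_le_one_of_le₀ ?_ (Nat.cast_nonneg _)⟩
  exact_mod_cast (Finset.card_filter_le _ _).trans (Nat.card_Icc 1 m).le

lemma abs_hoeffCDF_sub_le (m : ℕ) (F G : ℝ → ℝ) (x : ℝ) :
    |hoeffCDF m F x - hoeffCDF m G x| ≤ (m : ℝ)⁻¹ * ∑ j ∈ Finset.Icc 1 m,
      |(if muOS m j F ≤ x then (1 : ℝ) else 0) - (if muOS m j G ≤ x then 1 else 0)| := by
  rw [hoeffCDF, hoeffCDF, ← mul_sub, ← Finset.sum_sub_distrib, abs_mul,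
    abs_of_nonneg (by positivity)]
  gcongr
  exact Finset.abs_sum_le_sum_abs _ _

lemma integral_rpow_abs_hoeffCDF_sub_le (m : ℕ) (F G : ℝ → ℝ) {p : ℝ} (hp : 1 ≤ p) :
    ∫ x, |hoeffCDF m F x - hoeffCDF m G x| ^ p
      ≤ (m : ℝ)⁻¹ * ∑ j ∈ Finset.Icc 1 m, |muOS m j F - muOS m j G| := by
  have hint := fun j => integrable_abs_ite_le_sub_ite_le (muOS m j F) (muOS m j G)
  have hle_one : ∀ x, |hoeffCDF m F x - hoeffCDF m G x| ≤ 1 := fun x =>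
    abs_sub_le_of_nonneg_of_le (hoeffCDF_mem_Icc m F x).1 (hoeffCDF_mem_Icc m F x).2
      (hoeffCDF_mem_Icc m G x).1 (hoeffCDF_mem_Icc m G x).2
  calc ∫ x, |hoeffCDF m F x - hoeffCDF m G x| ^ p
      ≤ ∫ x, (m : ℝ)⁻¹ * ∑ j ∈ Finset.Icc 1 m,
          |(if muOS m j F ≤ x then (1 : ℝ) else 0) - (if muOS m j G ≤ x then 1 else 0)| :=
        integral_mono_of_nonneg (ae_of_all _ fun _ => by positivity)
          ((integrable_finsetSum _ fun j _ => hint j).const_mul _)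
          (ae_of_all _ fun x =>
            (Real.rpow_le_self_of_le_one (abs_nonneg _) (hle_one x) hp).trans
              (abs_hoeffCDF_sub_le m F G x))
    _ = (m : ℝ)⁻¹ * ∑ j ∈ Finset.Icc 1 m, |muOS m j F - muOS m j G| := by
        rw [integral_const_mul, integral_finsetSum _ fun j _ => hint j]
        simp_rw [integral_abs_ite_le_sub_ite_le]

/-- The Hoeffding CDF operator is non-expansive in the `L¹` norm:
for every `p ∈ [1, ∞)`, `‖H_m(F) − H_m(G)‖_p^p ≤ ‖F − G‖₁`. -/
theorem hoeffCDF_Lp_nonexpansive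
    (m : ℕ) (hm : 0 < m) (F G : ℝ → ℝ)
    (hF : IsCDF F) (hG : IsCDF G)
    (hFmean : HasFiniteMean F) (hGmean : HasFiniteMean G)
    (p : ℝ) (hp : 1 ≤ p) :
    (∫ x : ℝ, |hoeffCDF m F x - hoeffCDF m G x| ^ p) ≤ ∫ x : ℝ, |F x - G x| :=
  calc ∫ x, |hoeffCDF m F x - hoeffCDF m G x| ^ p
      ≤ (m : ℝ)⁻¹ * ∑ j ∈ Finset.Icc 1 m, |muOS m j F - muOS m j G| :=
        integral_rpow_abs_hoeffCDF_sub_le m F G hp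
    _ ≤ (m : ℝ)⁻¹ * ∑ j ∈ Finset.Icc 1 m,
          ∫ u in Ioo 0 1, |quantile F u - quantile G u| * betaDens m j u := by
        gcongr with j
        exact abs_muOS_sub_le m j hFmean hGmean
    _ = ∫ u in Ioo 0 1, |quantile F u - quantile G u| :=
        inv_mul_sum_integral_mul_betaDens hm (hFmean.sub hGmean).abs
    _ = ∫ x, |F x - G x| := hF.integral_abs_quantile_sub hG
end
end

section
/- Let m be a positive integer, let G be a CDF on ℝ with finite mean, and let w : (0,1) → ℝ be a weight function such that the product G^{-1}·w is integrable on (0,1). Then T_w(H_m(G)) = T_{P_m[w]}(G), where T_w(G) = ∫₀¹ G^{-1}(u) w(u) du and P_m[w](p) = ∑_{j=1}^m f_{B_{j:m}}(p) ∫_{(j−1)/m}^{j/m} w(t) dt. In other words, every L-functional of the Hoeffding transform H_m(G) equals an L-functional of G with updated weight P_m[w]. -/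
open MeasureTheory Filter Set
open scoped BoundedContinuousFunction ProbabilityTheory

noncomputable section

/-- The L-functional with weight `w`. -/
def Lfunctional (w : ℝ → ℝ) (G : ℝ → ℝ) : ℝ :=
  ∫ u in Ioo (0:ℝ) 1, quantile G u * w u

/-- The updated weight `P_m[w]`. -/
def Pweight (m : ℕ) (w : ℝ → ℝ) (p : ℝ) : ℝ :=
  ∑ j ∈ Finset.Icc 1 m,
    betaDens m j p * ∫ t in Ioc (((j : ℝ) - 1) / m) ((j : ℝ) / m), w t

/-!
`H_m(G)` is the uniform distribution on the expected order statistics `μ_{1:m}, …, μ_{m:m}`,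
and these are sorted: `μ_{j+1:m} - μ_{j:m} = ∫₀¹ G⁻¹ (f_{B_{j+1:m}} - f_{B_{j:m}})`, where the
difference of Beta densities is the derivative of `-C(m,j) u^j (1-u)^(m-j)`, so it has total mass
zero, and it changes sign once, from negative to positive at `j/m`; such a function has
nonnegative integral against the nondecreasing `G⁻¹`. Hence the quantile
function of `H_m(G)` equals `μ_{j:m}` on `((j-1)/m, j/m]`, and pairing it with `w` and exchanging
the finite sum with the integral produces the weight `P_m[w]`.
-/

open scoped Finset

theorem IsCDF.monotoneOn_quantile_s3 {G : ℝ → ℝ} (hG : IsCDF G) :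
    MonotoneOn (quantile G) (Ioo 0 1) := by
  intro p hp p' hp' hpp'
  have hbdd : BddBelow {x : ℝ | p ≤ G x} := by
    obtain ⟨x₀, hx₀⟩ :=
      eventually_atBot.1 (hG.tendsto_atBot.eventually (eventually_lt_nhds hp.1))
    exact ⟨x₀, fun x hx => le_of_not_gt fun hlt => (hx₀ x hlt.le).not_ge hx⟩
  have hne : {x : ℝ | p' ≤ G x}.Nonempty :=
    (hG.tendsto_atTop.eventually (eventually_ge_nhds hp'.2)).exists
  exact csInf_le_csInf hbdd hne fun x hx => hpp'.trans hx

theorem IntegrableOn.mul_continuous_Ioo {h b : ℝ → ℝ} {x y : ℝ}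
    (hh : IntegrableOn h (Ioo x y)) (hb : Continuous b) :
    IntegrableOn (fun u => h u * b u) (Ioo x y) :=
  hh.mul_continuousOn_of_subset hb.continuousOn measurableSet_Ioo isCompact_Icc
    Ioo_subset_Icc_self

theorem setIntegral_mul_nonneg_of_sign_change {α : Type*} [LinearOrder α] [MeasurableSpace α]
    {μ : Measure α} {s : Set α} (hs : MeasurableSet s) {q D : α → ℝ} {c : α} (hc : c ∈ s)
    (hq : MonotoneOn q s) (hD_left : ∀ u ∈ s, u ≤ c → D u ≤ 0)
    (hD_right : ∀ u ∈ s, c ≤ u → 0 ≤ D u) (hqD : IntegrableOn (fun u => q u * D u) s μ)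
    (hD : IntegrableOn D s μ) (hD_zero : ∫ u in s, D u ∂μ = 0) :
    0 ≤ ∫ u in s, q u * D u ∂μ := by
  have hsplit : ∫ u in s, q u * D u ∂μ = ∫ u in s, (q u - q c) * D u ∂μ := by
    simp only [sub_mul, integral_sub hqD (hD.const_mul (q c)), integral_const_mul, hD_zero,
      mul_zero, sub_zero]
  rw [hsplit]
  refine setIntegral_nonneg hs fun u hu => ?_
  rcases le_total u c with huc | hcu
  · exact mul_nonneg_of_nonpos_of_nonpos (sub_nonpos.2 (hq hu hc huc)) (hD_left u hu huc)
  · exact mul_nonneg (sub_nonneg.2 (hq hc hu hcu)) (hD_right u hu hcu)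

theorem continuous_betaDens (m j : ℕ) : Continuous (betaDens m j) := by
  unfold betaDens
  fun_prop

theorem betaDens_succ_sub {m j : ℕ} (hj : 1 ≤ j) (hjm : j < m) (u : ℝ) :
    betaDens m (j + 1) u - betaDens m j u
      = (m.choose j : ℝ) * u ^ (j - 1) * (1 - u) ^ (m - j - 1) * (m * u - j) := by
  obtain ⟨i, rfl⟩ : ∃ i, j = i + 1 := ⟨j - 1, by omega⟩
  obtain ⟨n, rfl⟩ : ∃ n, m = n + 1 := ⟨m - 1, by omega⟩
  obtain ⟨l, hl⟩ : ∃ l, n - i = l + 1 := ⟨n - i - 1, by omega⟩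
  have hpascal : ((n + 1).choose (i + 1) : ℝ) = n.choose i + n.choose (i + 1) := by
    exact_mod_cast Nat.choose_succ_succ n i
  have habsorb : ((n + 1).choose (i + 1) : ℝ) * (i + 1) = (n + 1) * n.choose i := by
    exact_mod_cast (Nat.add_one_mul_choose_eq n i).symm
  simp only [betaDens, Nat.add_sub_cancel, show n + 1 - (i + 1 + 1) = l by omega,
    show n + 1 - (i + 1) = l + 1 by omega, pow_succ]
  push_cast at habsorb ⊢
  linear_combination (-(n + 1 : ℝ) * u ^ i * u * (1 - u) ^ l) * hpascal
    + (u ^ i * (1 - u) ^ l) * habsorb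

theorem hasDerivAt_choose_mul_pow_mul_one_sub_pow {m j : ℕ} (hj : 1 ≤ j) (hjm : j < m)
    (u : ℝ) :
    HasDerivAt (fun u : ℝ => (m.choose j : ℝ) * (u ^ j * (1 - u) ^ (m - j)))
      (-(betaDens m (j + 1) u - betaDens m j u)) u := by
  have h := (((hasDerivAt_pow j u).mul
    ((hasDerivAt_pow (m - j) (1 - u)).comp u ((hasDerivAt_id u).const_sub 1))).const_mul
    (m.choose j : ℝ))
  refine h.congr_deriv ?_
  rw [betaDens_succ_sub hj hjm]
  obtain ⟨i, rfl⟩ : ∃ i, j = i + 1 := ⟨j - 1, by omega⟩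
  obtain ⟨l, rfl⟩ : ∃ l, m = i + 1 + (l + 1) := ⟨m - i - 2, by omega⟩
  simp only [Nat.add_sub_cancel_left, Nat.add_sub_cancel, Function.comp_apply, pow_succ]
  push_cast
  ring

theorem integral_betaDens_succ_sub {m j : ℕ} (hj : 1 ≤ j) (hjm : j < m) :
    ∫ u in Ioo (0 : ℝ) 1, (betaDens m (j + 1) u - betaDens m j u) = 0 := by
  have hcont : Continuous fun u => betaDens m (j + 1) u - betaDens m j u :=
    (continuous_betaDens m (j + 1)).sub (continuous_betaDens m j)
  have hFTC := intervalIntegral.integral_eq_sub_of_hasDerivAt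
    (fun u _ => hasDerivAt_choose_mul_pow_mul_one_sub_pow hj hjm u)
    (hcont.neg.intervalIntegrable 0 1)
  rw [← integral_Ioc_eq_integral_Ioo, ← intervalIntegral.integral_of_le zero_le_one,
    ← neg_eq_zero, ← intervalIntegral.integral_neg, hFTC]
  simp [zero_pow (by omega : j ≠ 0), zero_pow (by omega : m - j ≠ 0)]

theorem exists_pos_betaDens_succ_sub_eq {m j : ℕ} (hj : 1 ≤ j) (hjm : j < m) {u : ℝ}
    (hu : u ∈ Ioo 0 1) : ∃ a > 0, betaDens m (j + 1) u - betaDens m j u = a * (u - j / m) := by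
  refine ⟨(m.choose j : ℝ) * u ^ (j - 1) * (1 - u) ^ (m - j - 1) * m, ?_, ?_⟩
  · have := Nat.choose_pos hjm.le
    have := hu.1
    have := sub_pos.2 hu.2
    have : 0 < m := by omega
    positivity
  · have : (m : ℝ) ≠ 0 := by exact_mod_cast (by omega : m ≠ 0)
    rw [betaDens_succ_sub hj hjm]
    field_simp

theorem muOS_le_muOS_succ {m j : ℕ} (hj : 1 ≤ j) (hjm : j < m) {G : ℝ → ℝ} (hG : IsCDF G)
    (hGmean : HasFiniteMean G) : muOS m j G ≤ muOS m (j + 1) G := by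
  have hm : (0 : ℝ) < m := by exact_mod_cast (by omega : 0 < m)
  have hD_cont : Continuous fun u => betaDens m (j + 1) u - betaDens m j u :=
    (continuous_betaDens m (j + 1)).sub (continuous_betaDens m j)
  have hdiff : muOS m (j + 1) G - muOS m j G
      = ∫ u in Ioo 0 1, quantile G u * (betaDens m (j + 1) u - betaDens m j u) := by
    rw [muOS, muOS, ← integral_sub
      (IntegrableOn.mul_continuous_Ioo hGmean (continuous_betaDens m (j + 1)))
      (IntegrableOn.mul_continuous_Ioo hGmean (continuous_betaDens m j))]
    simp only [mul_sub]
  refine sub_nonneg.1 (hdiff ▸ setIntegral_mul_nonneg_of_sign_change measurableSet_Ioo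
    (c := j / m) ⟨by positivity, (div_lt_one hm).2 (by exact_mod_cast hjm)⟩
    hG.monotoneOn_quantile_s3 (fun u hu huc => ?_) (fun u hu hcu => ?_)
    (IntegrableOn.mul_continuous_Ioo hGmean hD_cont)
    (hD_cont.integrableOn_Icc.mono_set Ioo_subset_Icc_self) (integral_betaDens_succ_sub hj hjm))
  · obtain ⟨a, ha, h⟩ := exists_pos_betaDens_succ_sub_eq hj hjm hu
    exact h ▸ mul_nonpos_of_nonneg_of_nonpos ha.le (sub_nonpos.2 huc)
  · obtain ⟨a, ha, h⟩ := exists_pos_betaDens_succ_sub_eq hj hjm hu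
    exact h ▸ mul_nonneg ha.le (sub_nonneg.2 hcu)

theorem monotoneOn_muOS (m : ℕ) {G : ℝ → ℝ} (hG : IsCDF G) (hGmean : HasFiniteMean G) :
    MonotoneOn (fun j => muOS m j G) (Icc 1 m) := by
  intro i hi k hk hik
  induction k, hik using Nat.le_induction with
  | base => exact le_rfl
  | succ k hik ih =>
    exact (ih ⟨hi.1.trans hik, Nat.le_of_succ_le hk.2⟩).trans
      (muOS_le_muOS_succ (hi.1.trans hik) hk.2 hG hGmean)

theorem le_card_filter_le_iff {β : Type*} [LinearOrder β] {a : ℕ → β} {m k : ℕ}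
    (ha : MonotoneOn a (Icc 1 m)) (hk : k ∈ Icc 1 m) (x : β) :
    k ≤ #{j ∈ Finset.Icc 1 m | a j ≤ x} ↔ a k ≤ x := by
  constructor
  · intro hcard
    by_contra! hlt
    have hsub : {j ∈ Finset.Icc 1 m | a j ≤ x} ⊆ Finset.Icc 1 (k - 1) := by
      intro j hj
      rw [Finset.mem_filter, Finset.mem_Icc] at hj
      refine Finset.mem_Icc.2 ⟨hj.1.1, Nat.le_sub_one_of_lt (lt_of_not_ge fun hkj => ?_)⟩
      exact (ha hk hj.1 hkj).not_gt (hj.2.trans_lt hlt)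
    have := (Finset.card_le_card hsub).trans' hcard
    simp only [Nat.card_Icc] at this
    have := hk.1
    omega
  · intro hx
    calc k = #(Finset.Icc 1 k) := by simp
      _ ≤ _ := Finset.card_le_card fun j hj => by
        rw [Finset.mem_Icc] at hj
        have hj' : j ∈ Icc 1 m := ⟨hj.1, hj.2.trans hk.2⟩
        exact Finset.mem_filter.2 ⟨Finset.mem_Icc.2 hj', (ha hj' hk hj.2).trans hx⟩

theorem ceil_mul_mem_Icc {m : ℕ} (hm : 0 < m) {u : ℝ} (hu : u ∈ Ioc 0 1) :
    ⌈m * u⌉₊ ∈ Icc 1 m :=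
  have hm' : (0 : ℝ) < m := Nat.cast_pos.2 hm
  ⟨Nat.ceil_pos.2 (mul_pos hm' hu.1), Nat.ceil_le.2 (mul_le_of_le_one_right hm'.le hu.2)⟩

theorem mem_Ioc_sub_one_div_iff {m j : ℕ} (hm : 0 < m) (hj : 1 ≤ j) {u : ℝ} :
    u ∈ Ioc (((j : ℝ) - 1) / m) ((j : ℝ) / m) ↔ ⌈m * u⌉₊ = j := by
  have hm' : (0 : ℝ) < m := Nat.cast_pos.2 hm
  rw [Nat.ceil_eq_iff (by omega), Nat.cast_sub hj, Nat.cast_one, mem_Ioc,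
    div_lt_iff₀' hm', le_div_iff₀' hm']

def stepCDF (m : ℕ) (a : ℕ → ℝ) (x : ℝ) : ℝ :=
  (m : ℝ)⁻¹ * ∑ j ∈ Finset.Icc 1 m, if a j ≤ x then (1 : ℝ) else 0

theorem quantile_stepCDF {a : ℕ → ℝ} {m : ℕ} (hm : 0 < m) (ha : MonotoneOn a (Icc 1 m))
    {u : ℝ} (hu : u ∈ Ioc 0 1) : quantile (stepCDF m a) u = a ⌈m * u⌉₊ := by
  have hk := ceil_mul_mem_Icc hm hu
  have hset : {x | u ≤ stepCDF m a x} = Ici (a ⌈m * u⌉₊) := by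
    ext x
    rw [mem_ofPred_eq, mem_Ici, stepCDF, Finset.sum_boole, le_inv_mul_iff₀ (Nat.cast_pos.2 hm),
      ← Nat.ceil_le, le_card_filter_le_iff ha hk]
  rw [quantile, hset, csInf_Ici]

theorem quantHoeff_apply {m : ℕ} (hm : 0 < m) (h : ℝ → ℝ) {u : ℝ} (hu : u ∈ Ioc 0 1) :
    quantHoeff m h u = ∫ t in Ioo 0 1, h t * betaDens m ⌈m * u⌉₊ t := by
  have hk : ⌈m * u⌉₊ ∈ Finset.Icc 1 m := by
    rw [← Finset.mem_coe, Finset.coe_Icc]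
    exact ceil_mul_mem_Icc hm hu
  rw [quantHoeff, Finset.sum_congr rfl
    (g := fun j => if ⌈m * u⌉₊ = j then ∫ t in Ioo 0 1, h t * betaDens m j t else 0)
    fun j hj => by simp only [mem_Ioc_sub_one_div_iff hm (Finset.mem_Icc.1 hj).1, mul_boole],
    Finset.sum_ite_eq, if_pos hk]

theorem quantile_hoeffCDF {m : ℕ} (hm : 0 < m) {G : ℝ → ℝ} (hG : IsCDF G)
    (hGmean : HasFiniteMean G) {u : ℝ} (hu : u ∈ Ioc 0 1) :
    quantile (hoeffCDF m G) u = quantHoeff m (quantile G) u :=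
  (quantile_stepCDF hm (monotoneOn_muOS m hG hGmean) hu).trans
    (quantHoeff_apply hm _ hu).symm

theorem Ioc_sub_one_div_subset_Ioc {m j : ℕ} (hj : j ∈ Finset.Icc 1 m) :
    Ioc (((j : ℝ) - 1) / m) ((j : ℝ) / m) ⊆ Ioc 0 1 := by
  rw [Finset.mem_Icc] at hj
  have h1 : (1 : ℝ) ≤ j := by exact_mod_cast hj.1
  have hjm : (j : ℝ) ≤ m := by exact_mod_cast hj.2
  exact fun u hu => ⟨(div_nonneg (sub_nonneg.2 h1) (Nat.cast_nonneg m)).trans_lt hu.1,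
    hu.2.trans (div_le_one_of_le₀ hjm (Nat.cast_nonneg m))⟩

theorem setIntegral_Ioo_indicator {s : Set ℝ} (hs : MeasurableSet s) (hsub : s ⊆ Ioc 0 1)
    (w : ℝ → ℝ) : ∫ u in Ioo 0 1, s.indicator w u = ∫ u in s, w u := by
  rw [← integral_Ioc_eq_integral_Ioo, setIntegral_indicator hs, inter_eq_right.2 hsub]

theorem integral_quantHoeff_mul {m : ℕ} {h w : ℝ → ℝ} (hh : IntegrableOn h (Ioo 0 1))
    (hw : IntegrableOn w (Ioo 0 1)) :
    ∫ u in Ioo 0 1, quantHoeff m h u * w u = ∫ u in Ioo 0 1, h u * Pweight m w u := by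
  have hleft : ∀ u, quantHoeff m h u * w u = ∑ j ∈ Finset.Icc 1 m,
      (∫ t in Ioo 0 1, h t * betaDens m j t) *
        (Ioc (((j : ℝ) - 1) / m) ((j : ℝ) / m)).indicator w u := by
    intro u
    rw [quantHoeff, Finset.sum_mul]
    refine Finset.sum_congr rfl fun j _ => ?_
    rw [indicator_apply]
    split_ifs <;> ring
  have hright : ∀ u, h u * Pweight m w u = ∑ j ∈ Finset.Icc 1 m,
      h u * betaDens m j u * ∫ t in Ioc (((j : ℝ) - 1) / m) ((j : ℝ) / m), w t := by
    intro u
    rw [Pweight, Finset.mul_sum]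
    exact Finset.sum_congr rfl fun j _ => (mul_assoc _ _ _).symm
  simp only [hleft, hright]
  rw [integral_finsetSum _ fun j _ => (hw.indicator measurableSet_Ioc).const_mul _,
    integral_finsetSum _ fun j _ =>
      (IntegrableOn.mul_continuous_Ioo hh (continuous_betaDens m j)).mul_const _]
  refine Finset.sum_congr rfl fun j hj => ?_
  rw [integral_const_mul, integral_mul_const,
    setIntegral_Ioo_indicator measurableSet_Ioc (Ioc_sub_one_div_subset_Ioc hj)]

theorem Lfunctional_hoeffCDF_general
    (m : ℕ) (hm : 0 < m) (G w : ℝ → ℝ)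
    (hG : IsCDF G) (hGmean : HasFiniteMean G)
    (hw : IntegrableOn w (Ioo (0:ℝ) 1)) :
    Lfunctional w (hoeffCDF m G) = Lfunctional (Pweight m w) G :=
  calc Lfunctional w (hoeffCDF m G)
      = ∫ u in Ioo 0 1, quantHoeff m (quantile G) u * w u :=
        setIntegral_congr_fun measurableSet_Ioo fun u hu => by
          rw [quantile_hoeffCDF hm hG hGmean (Ioo_subset_Ioc_self hu)]
    _ = Lfunctional (Pweight m w) G := integral_quantHoeff_mul hGmean hw

/-- Closure of L-functionals under the Hoeffding operator:
`T_w(H_m(G)) = T_{P_m[w]}(G)`. -/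
theorem Lfunctional_hoeffCDF
    (m : ℕ) (hm : 0 < m) (G w : ℝ → ℝ)
    (hG : IsCDF G) (hGmean : HasFiniteMean G)
    (hw : IntegrableOn w (Ioo (0:ℝ) 1))
    (hGw : IntegrableOn (fun u => quantile G u * w u) (Ioo (0:ℝ) 1)) :
    Lfunctional w (hoeffCDF m G) = Lfunctional (Pweight m w) G :=
  Lfunctional_hoeffCDF_general m hm G w hG hGmean hw
end
end
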